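/- Let f : [0, ∞) → ℝ be increasing and convex with f(0) ≤ 0, with subdifferential function k. Let x₁, ..., xₙ be positive semidefinite matrices with spectra in [m, M] ⊂ [0, ∞), and φ₁, ..., φₙ positive linear maps on matrices with ∑ᵢ φᵢ(1) = 1. Then f(‖∑ᵢ φᵢ(xᵢ)‖) ≤ ‖∑ᵢ φᵢ(f(xᵢ))‖, where ‖·‖ is the operator norm. -/

import Mathlib

open Matrix
open scoped ComplexOrder Classical

/-- Functional calculus for (Hermitian) matrices via the spectral theorem. -/
noncomputable def fc {n : ℕ} (f : ℝ → ℝ) (A : Matrix (Fin n) (Fin n) ℂ) :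
    Matrix (Fin n) (Fin n) ℂ :=
  if h : A.IsHermitian then
    (h.eigenvectorUnitary : Matrix (Fin n) (Fin n) ℂ) *
      Matrix.diagonal (fun i => (f (h.eigenvalues i) : ℂ)) *
      (star h.eigenvectorUnitary : Matrix (Fin n) (Fin n) ℂ)
  else 0

/-- The Loewner order: `A ≤ B` iff `B - A` is positive semidefinite. -/
def Loewner {n : ℕ} (A B : Matrix (Fin n) (Fin n) ℂ) : Prop := (B - A).PosSemidef

/-- The operator norm of a matrix acting on Euclidean space. -/
noncomputable def opNorm {n : ℕ} (A : Matrix (Fin n) (Fin n) ℂ) : ℝ :=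
  ‖Matrix.toEuclideanCLM (𝕜 := ℂ) (n := Fin n) A‖

/-!
Let `y = ‖∑ φᵢ(xᵢ)‖` and `κ = k y`. The supporting line of `f` at `y` gives
`κ t ≤ f t + (κ y - f y)` for `t ≥ 0`, hence, by the functional calculus,
`κ xᵢ ≤ f(xᵢ) + (κ y - f y)·1`. Applying the positive maps and summing, unitality yields
`κ ∑ φᵢ(xᵢ) ≤ ∑ φᵢ(f(xᵢ)) + (κ y - f y)·1`. When `f y > 0`, the bound `f 0 ≤ 0` makes both
`κ` and `κ y - f y` nonnegative, so the norm, being monotone on positive elements, gives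
`κ y ≤ ‖∑ φᵢ(f(xᵢ))‖ + κ y - f y`. The argument runs in any pair of C⋆-algebras; the operator
norm of matrices is the C⋆-norm of `Matrix.Norms.L2Operator`.
-/

lemma CStarRing.norm_one_le {B : Type*} [NormedRing B] [StarRing B] [CStarRing B] :
    ‖(1 : B)‖ ≤ 1 := by
  rcases subsingleton_or_nontrivial B with hB | hB
  · simp [Subsingleton.elim (1 : B) 0]
  · exact CStarRing.norm_one.le

lemma sum_map_le_sum_map {ι R M N : Type*} [CommSemiring R] [AddCommGroup M] [PartialOrder M]
    [IsOrderedAddMonoid M] [Module R M] [AddCommGroup N] [PartialOrder N] [IsOrderedAddMonoid N]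
    [Module R N] (s : Finset ι) (φ : ι → M →ₗ[R] N) (hφ : ∀ i a, 0 ≤ a → 0 ≤ φ i a)
    {a b : ι → M} (hab : ∀ i ∈ s, a i ≤ b i) : ∑ i ∈ s, φ i (a i) ≤ ∑ i ∈ s, φ i (b i) :=
  Finset.sum_le_sum fun i hi =>
    sub_nonneg.mp (map_sub (φ i) _ _ ▸ hφ i _ (sub_nonneg.mpr (hab i hi)))

lemma smul_le_cfc_add_algebraMap {A : Type*} [Ring A] [StarRing A] [Algebra ℝ A]
    [TopologicalSpace A] [PartialOrder A] [StarOrderedRing A]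
    [ContinuousFunctionalCalculus ℝ A IsSelfAdjoint] {f : ℝ → ℝ} {a : A} {κ c : ℝ}
    (h : ∀ t ∈ spectrum ℝ a, κ * t ≤ f t + c)
    (hf : ContinuousOn f (spectrum ℝ a) := by cfc_cont_tac) (ha : IsSelfAdjoint a := by cfc_tac) :
    κ • a ≤ cfc f a + algebraMap ℝ A c := by
  rw [← cfc_const_mul_id κ a, ← cfc_add_const c f a]
  exact cfc_mono h

theorem apply_norm_sum_map_le_norm_sum_map_cfc {ι A B : Type*} [Fintype ι]
    [Ring A] [StarRing A] [Algebra ℝ A] [TopologicalSpace A] [PartialOrder A]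
    [StarOrderedRing A] [ContinuousFunctionalCalculus ℝ A IsSelfAdjoint] [NonnegSpectrumClass ℝ A]
    [CStarAlgebra B] [PartialOrder B] [StarOrderedRing B]
    (f k : ℝ → ℝ) (hf0 : f 0 ≤ 0)
    (hk : ∀ y ∈ Set.Ici (0 : ℝ), ∀ t ∈ Set.Ici (0 : ℝ), f y + k y * (t - y) ≤ f t)
    (x : ι → A) (hx : ∀ i, 0 ≤ x i) (hfx : ∀ i, ContinuousOn f (spectrum ℝ (x i)))
    (φ : ι → A →ₗ[ℝ] B) (hφ : ∀ i a, 0 ≤ a → 0 ≤ φ i a) (hunital : ∑ i, φ i 1 = 1) :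
    f ‖∑ i, φ i (x i)‖ ≤ ‖∑ i, φ i (cfc f (x i))‖ := by
  set y := ‖∑ i, φ i (x i)‖
  set T := ∑ i, φ i (cfc f (x i))
  have hy : 0 ≤ y := norm_nonneg _
  rcases le_or_gt (f y) 0 with hfy | hfy
  · exact hfy.trans (norm_nonneg _)
  set κ := k y
  set c := κ * y - f y
  have hκy : f y ≤ κ * y := by linarith [hk y hy 0 Set.self_mem_Ici]
  have hκ : 0 ≤ κ := by nlinarith
  have hsupp (i : ι) : κ • x i ≤ cfc f (x i) + algebraMap ℝ A c :=
    smul_le_cfc_add_algebraMap (fun t ht => by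
      linarith [hk y hy t (spectrum_nonneg_of_nonneg (hx i) ht)]) (hfx i)
  have hsum : κ • ∑ i, φ i (x i) ≤ T + algebraMap ℝ B c := by
    have := sum_map_le_sum_map Finset.univ φ hφ fun i _ => hsupp i
    simpa only [map_smul, map_add, Algebra.algebraMap_eq_smul_one, Finset.sum_add_distrib,
      ← Finset.smul_sum, hunital] using this
  have hS : 0 ≤ ∑ i, φ i (x i) := Finset.sum_nonneg fun i _ => hφ i _ (hx i)
  have hc : ‖algebraMap ℝ B c‖ ≤ c := by
    rw [norm_algebraMap, Real.norm_of_nonneg (by linarith)]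
    exact mul_le_of_le_one_right (by linarith) CStarRing.norm_one_le
  calc f y = ‖κ • ∑ i, φ i (x i)‖ - c := by rw [norm_smul, Real.norm_of_nonneg hκ]; ring
    _ ≤ ‖T + algebraMap ℝ B c‖ - c := by
        gcongr
        exact CStarAlgebra.norm_le_norm_of_nonneg_of_le (smul_nonneg hκ hS) hsum
    _ ≤ ‖T‖ := by linarith [norm_add_le T (algebraMap ℝ B c)]

lemma fc_eq_cfc {n : ℕ} {A : Matrix (Fin n) (Fin n) ℂ} (hA : A.IsHermitian) (f : ℝ → ℝ) :
    fc f A = cfc f A := by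
  rw [hA.cfc_eq, fc, dif_pos hA, IsHermitian.cfc, Unitary.conjStarAlgAut_apply]
  rfl

theorem stmt_6_general {n N : ℕ} (f k : ℝ → ℝ) (hf0 : f 0 ≤ 0)
    (hk : ∀ y ∈ Set.Ici (0 : ℝ), ∀ t ∈ Set.Ici (0 : ℝ), f y + k y * (t - y) ≤ f t)
    (x : Fin N → Matrix (Fin n) (Fin n) ℂ) (hx : ∀ i, (x i).PosSemidef)
    (φ : Fin N → (Matrix (Fin n) (Fin n) ℂ →ₗ[ℂ] Matrix (Fin n) (Fin n) ℂ))
    (hφ : ∀ i A, A.PosSemidef → (φ i A).PosSemidef)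
    (hunital : ∑ i, φ i 1 = 1) :
    f (opNorm (∑ i, φ i (x i))) ≤ opNorm (∑ i, φ i (fc f (x i))) := by
  have hfc (i : Fin N) : fc f (x i) = cfc f (x i) := fc_eq_cfc (hx i).isHermitian f
  simp only [hfc]
  open scoped Matrix.Norms.L2Operator MatrixOrder in
  exact apply_norm_sum_map_le_norm_sum_map_cfc f k hf0 hk x (fun i => (hx i).nonneg)
    (fun i => (x i).finite_real_spectrum.continuousOn f) (fun i => (φ i).restrictScalars ℝ)
    (fun i a ha => (hφ i a ha.posSemidef).nonneg) hunital

theorem stmt_6 {n N : ℕ} (m M : ℝ) (hm : 0 ≤ m) (hmM : m < M) (f k : ℝ → ℝ)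
    (hmono : MonotoneOn f (Set.Ici 0)) (hf : ConvexOn ℝ (Set.Ici 0) f) (hf0 : f 0 ≤ 0)
    (hk : ∀ y ∈ Set.Ici (0 : ℝ), ∀ t ∈ Set.Ici (0 : ℝ), f y + k y * (t - y) ≤ f t)
    (x : Fin N → Matrix (Fin n) (Fin n) ℂ) (hx : ∀ i, (x i).PosSemidef)
    (hspec : ∀ i j, ((hx i).1).eigenvalues j ∈ Set.Icc m M)
    (φ : Fin N → (Matrix (Fin n) (Fin n) ℂ →ₗ[ℂ] Matrix (Fin n) (Fin n) ℂ))
    (hφ : ∀ i A, A.PosSemidef → (φ i A).PosSemidef)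
    (hunital : ∑ i, φ i 1 = 1) :
    f (opNorm (∑ i, φ i (x i))) ≤ opNorm (∑ i, φ i (fc f (x i))) :=
  stmt_6_general f k hf0 hk x hx φ hφ hunital
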